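/- Let n ≥ 1 and α ∈ (0,1), and let (S_1, …, S_{n+1}) be real-valued random variables whose joint distribution is μ, a probability measure on ℝ^{n+1} (the variables need not be exchangeable or independent). Let k = ⌈(1−α)(n+1)⌉, assume k ≤ n, and let Q denote the k-th smallest value among S_1, …, S_n. Then P(S_{n+1} ≤ Q) ≥ 1 − α − (1/(n+1)) Σ_{i=1}^{n} TV(μ, μ^{i↔n+1}), where μ^{i↔n+1} denotes the pushforward of μ under the measurable map on ℝ^{n+1} that swaps the i-th and (n+1)-th coordinates. -/

import Mathlib

open MeasureTheory Filter

/-- Total variation distance between two measures: the supremum over measurable sets `A`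
of `|P(A) − Q(A)|`. -/
noncomputable def tvDist {α : Type*} [MeasurableSpace α] (P Q : Measure α) : ℝ :=
  ⨆ A : {A : Set α // MeasurableSet A}, |(P A.1).toReal - (Q A.1).toReal|

/-- The `k`-th smallest value of a list of reals (`k` counted from 1). -/
noncomputable def kthSmallest (l : List ℝ) (k : ℕ) : ℝ :=
  (l.mergeSort (fun a b => a ≤ b)).getD (k - 1) 0

/-!
Let `E i` be the event that fewer than `k` scores lie strictly below `S_i`. Every outcome lies
in at least `k` of these events, so `∑ i, P(E i) ≥ k ≥ (1 - α)(n + 1)`. Swapping coordinates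
`i` and `n + 1` carries `E (n + 1)` onto `E i`, hence
`P(E i) ≤ P(E (n + 1)) + TV(μ, μ^{i↔n+1})`; and `E (n + 1)` is the coverage event, since
`S_{n+1} ≤ Q` iff fewer than `k` calibration scores lie strictly below `S_{n+1}`.
-/

open Finset
open scoped ENNReal

namespace List

theorem countP_ofFn {β : Type*} {n : ℕ} (f : Fin n → β) (p : β → Bool) :
    (ofFn f).countP p = #{i | p (f i)} := by
  rw [ofFn_eq_map, countP_map, countP_eq_length_filter, Fin.univ_def]
  simp [Finset.filter, Finset.card, Function.comp_def]

variable {α : Type*} [LinearOrder α] {m : List α}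

theorem SortedLE.countP_lt_getElem_le (hm : m.SortedLE) (i : ℕ) (hi : i < m.length) :
    m.countP (· < m[i]) ≤ i := by
  have hdrop : (m.drop i).countP (· < m[i]) = 0 := by
    rw [countP_eq_zero]
    intro x hx
    obtain ⟨j, hj, rfl⟩ := mem_iff_getElem.1 hx
    rw [getElem_drop]
    simpa using hm.getElem_le_getElem_of_le (Nat.le_add_right i j)
  calc m.countP (· < m[i])
      = (m.take i).countP (· < m[i]) + (m.drop i).countP (· < m[i]) := by
        rw [← countP_append, take_append_drop]
    _ ≤ (m.take i).length := by rw [hdrop, add_zero]; exact countP_le_length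
    _ ≤ i := length_take_le i m

theorem SortedLE.lt_countP_le_getElem (hm : m.SortedLE) (i : ℕ) (hi : i < m.length) :
    i < m.countP (· ≤ m[i]) := by
  have htake : (m.take (i + 1)).countP (· ≤ m[i]) = i + 1 := by
    rw [countP_eq_length.2, length_take_of_le hi]
    intro x hx
    obtain ⟨j, hj, rfl⟩ := mem_iff_getElem.1 hx
    rw [getElem_take]
    simpa using hm.getElem_le_getElem_of_le (by rw [length_take] at hj; omega)
  have := (take_sublist (i + 1) m).countP_le (p := (· ≤ m[i]))
  omega

end List

theorem le_kthSmallest_iff {l : List ℝ} {k : ℕ} (hk : 1 ≤ k) (hkl : k ≤ l.length)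
    (a : ℝ) : a ≤ kthSmallest l k ↔ l.countP (· < a) < k := by
  set m := l.mergeSort (fun a b => a ≤ b)
  have hperm : m.Perm l := List.mergeSort_perm l _
  have hi : k - 1 < m.length := by rw [hperm.length_eq]; omega
  have hm : m.SortedLE := List.sortedLE_mergeSort
  have hkth : kthSmallest l k = m[k - 1] := List.getD_eq_getElem m 0 hi
  simp only [hkth, ← hperm.countP_eq]
  constructor
  · intro ha
    have hmono := List.countP_mono_left (l := m) (p := (· < a)) (q := (· < m[k - 1]))
      fun x _ => by simpa using fun hx => hx.trans_le ha
    have := hm.countP_lt_getElem_le (k - 1) hi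
    omega
  · intro hlt
    by_contra! hgt
    have hmono := List.countP_mono_left (l := m) (p := (· ≤ m[k - 1])) (q := (· < a))
      fun x _ => by simpa using fun hx => hx.trans_lt hgt
    have := hm.lt_countP_le_getElem (k - 1) hi
    omega

section StrictRank

variable {ι α : Type*} [Fintype ι] [LinearOrder α]

def strictRank (x : ι → α) (i : ι) : ℕ := #{j | x j < x i}

theorem strictRank_comp_perm (x : ι → α) (σ : Equiv.Perm ι) (i : ι) :
    strictRank (x ∘ σ) i = strictRank x (σ i) :=
  card_equiv σ (by simp)

-- A minimiser of `x` outside the set has at least `k` coordinates strictly below it,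
-- and all of them lie in the set.
theorem le_card_strictRank_lt (x : ι → α) {k : ℕ} (hk : k ≤ Fintype.card ι) :
    k ≤ #{i | strictRank x i < k} := by
  by_cases hall : ∀ i, strictRank x i < k
  · rwa [filter_true_of_mem fun i _ => hall i, card_univ]
  obtain ⟨i₁, hi₁⟩ := not_forall.1 hall
  obtain ⟨i₀, hi₀, hmin⟩ :=
    exists_min_image {i | k ≤ strictRank x i} x ⟨i₁, by simpa using hi₁⟩
  refine (mem_filter.1 hi₀).2.trans (card_le_card fun j hj => ?_)
  simp only [mem_filter, mem_univ, true_and] at hj ⊢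
  by_contra! hkj
  exact (hmin j (by simpa using hkj)).not_gt hj

end StrictRank

theorem le_kthSmallest_ofFn_iff {n k : ℕ} (hk : 1 ≤ k) (hkn : k ≤ n)
    (x : Fin (n + 1) → ℝ) :
    x (Fin.last n) ≤ kthSmallest (List.ofFn fun i : Fin n => x i.castSucc) k ↔
      strictRank x (Fin.last n) < k := by
  rw [le_kthSmallest_iff hk (by simpa using hkn), List.countP_ofFn, strictRank,
    card_filter, card_filter, Fin.sum_univ_castSucc]
  simp

theorem abs_sub_le_tvDist {Ω : Type*} [MeasurableSpace Ω] {P Q : Measure Ω} [IsFiniteMeasure P]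
    [IsFiniteMeasure Q] {A : Set Ω} (hA : MeasurableSet A) :
    |(P A).toReal - (Q A).toReal| ≤ tvDist P Q := by
  have hbdd : BddAbove (Set.range fun B : {B : Set Ω // MeasurableSet B} =>
      |(P B.1).toReal - (Q B.1).toReal|) := by
    refine ⟨max (P.real Set.univ) (Q.real Set.univ), ?_⟩
    rintro _ ⟨B, rfl⟩
    exact abs_sub_le_of_nonneg_of_le measureReal_nonneg
      ((measureReal_mono (Set.subset_univ _)).trans (le_max_left _ _)) measureReal_nonneg
      ((measureReal_mono (Set.subset_univ _)).trans (le_max_right _ _))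
  exact le_ciSup hbdd ⟨A, hA⟩

open Classical in
theorem mul_measure_univ_le_sum_measure_of_le_card {Ω ι : Type*} [MeasurableSpace Ω] [Fintype ι]
    (μ : Measure Ω) {E : ι → Set Ω} (hE : ∀ i, MeasurableSet (E i)) {k : ℕ}
    (hcover : ∀ x, k ≤ #{i | x ∈ E i}) :
    k * μ Set.univ ≤ ∑ i, μ (E i) := by
  calc k * μ Set.univ = ∫⁻ _, (k : ℝ≥0∞) ∂μ := (lintegral_const _).symm
    _ ≤ ∫⁻ x, ∑ i, (E i).indicator 1 x ∂μ := lintegral_mono fun x => by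
        simpa [Set.indicator_apply] using hcover x
    _ = ∑ i, μ (E i) := by
        rw [lintegral_finsetSum _ fun i _ => measurable_one.indicator (hE i)]
        simp only [lintegral_indicator_one (hE _)]

section Scores

variable {ι : Type*} [Fintype ι]

theorem measurable_strictRank (i : ι) : Measurable fun x : ι → ℝ => strictRank x i := by
  simp only [strictRank, card_filter]
  exact Finset.measurable_sum _ fun j _ => Measurable.ite
    (measurableSet_lt (measurable_pi_apply j) (measurable_pi_apply i)) measurable_const
    measurable_const

theorem measurableSet_strictRank_lt (i : ι) (k : ℕ) :
    MeasurableSet {x : ι → ℝ | strictRank x i < k} :=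
  measurable_strictRank i measurableSet_Iio

theorem map_comp_perm_apply_strictRank_lt (μ : Measure (ι → ℝ)) (σ : Equiv.Perm ι) (i : ι)
    (k : ℕ) :
    (μ.map fun x => x ∘ σ) {x | strictRank x i < k} = μ {x | strictRank x (σ i) < k} := by
  rw [Measure.map_apply (by fun_prop : Measurable fun x : ι → ℝ => x ∘ σ)
    (measurableSet_strictRank_lt i k)]
  simp only [Set.preimage_ofPred_eq, strictRank_comp_perm]

theorem measure_strictRank_lt_le_add_tvDist (μ : Measure (ι → ℝ)) [IsProbabilityMeasure μ]
    [DecidableEq ι] (i t : ι) (k : ℕ) :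
    (μ {x | strictRank x i < k}).toReal ≤
      (μ {x | strictRank x t < k}).toReal + tvDist μ (μ.map fun x => x ∘ Equiv.swap i t) := by
  have h := abs_sub_le_tvDist (P := μ) (Q := μ.map fun x => x ∘ Equiv.swap i t)
    (measurableSet_strictRank_lt t k)
  rw [map_comp_perm_apply_strictRank_lt, Equiv.swap_apply_right] at h
  linarith [(abs_sub_le_iff.1 h).2]

theorem card_le_sum_measure_strictRank_lt (μ : Measure (ι → ℝ)) [IsProbabilityMeasure μ]
    {k : ℕ} (hk : k ≤ Fintype.card ι) :
    (k : ℝ) ≤ ∑ i, (μ {x | strictRank x i < k}).toReal := by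
  have h := mul_measure_univ_le_sum_measure_of_le_card μ (fun i => measurableSet_strictRank_lt i k)
    (k := k) fun x => by simpa using le_card_strictRank_lt x hk
  rw [measure_univ, mul_one] at h
  calc (k : ℝ) = (k : ℝ≥0∞).toReal := (ENNReal.toReal_natCast k).symm
    _ ≤ (∑ i, μ {x | strictRank x i < k}).toReal :=
        ENNReal.toReal_mono (ENNReal.sum_ne_top.2 fun i _ => measure_ne_top μ _) h
    _ = ∑ i, (μ {x | strictRank x i < k}).toReal :=
        ENNReal.toReal_sum fun i _ => measure_ne_top μ _

end Scores

theorem conformal_coverage_nonexchangeable_general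
    (n : ℕ) (α : ℝ) (hα : α ∈ Set.Ioo (0 : ℝ) 1)
    (μ : Measure (Fin (n + 1) → ℝ)) [IsProbabilityMeasure μ]
    (k : ℕ) (hk : k = ⌈(1 - α) * ((n : ℝ) + 1)⌉₊) (hkn : k ≤ n) :
    1 - α - (1 / ((n : ℝ) + 1)) *
        ∑ i : Fin n,
          tvDist μ (μ.map fun s => s ∘ (Equiv.swap i.castSucc (Fin.last n)))
      ≤ (μ {s | s (Fin.last n) ≤
            kthSmallest (List.ofFn fun i : Fin n => s i.castSucc) k}).toReal := by
  have hceil : (1 - α) * ((n : ℝ) + 1) ≤ k := hk ▸ Nat.le_ceil _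
  have hk1 : 1 ≤ k :=
    hk ▸ Nat.lt_ceil.2 (by simpa using mul_pos (sub_pos.2 hα.2) n.cast_add_one_pos)
  have hcover := card_le_sum_measure_strictRank_lt μ (k := k) (by rw [Fintype.card_fin]; omega)
  have hswap := sum_le_sum (s := univ) fun (i : Fin n) _ =>
    measure_strictRank_lt_le_add_tvDist μ i.castSucc (Fin.last n) k
  rw [Fin.sum_univ_castSucc] at hcover
  rw [sum_add_distrib, sum_const, card_univ, Fintype.card_fin, nsmul_eq_mul] at hswap
  simp_rw [le_kthSmallest_ofFn_iff hk1 hkn]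
  rw [one_div_mul_eq_div, sub_le_iff_le_add, ← sub_le_iff_le_add',
    le_div_iff₀ n.cast_add_one_pos]
  linarith

/-- Coverage bound for split conformal prediction with a pretrained score under
nonexchangeable data: if `μ` is the joint law of the scores `S_1, …, S_{n+1}`,
`k = ⌈(1−α)(n+1)⌉ ≤ n`, and `Q` is the `k`-th smallest of `S_1, …, S_n`, then
`P(S_{n+1} ≤ Q) ≥ 1 − α − (1/(n+1)) Σ_{i=1}^n TV(μ, μ^{i↔n+1})`. -/
theorem conformal_coverage_nonexchangeable
    (n : ℕ) (hn : 1 ≤ n) (α : ℝ) (hα : α ∈ Set.Ioo (0 : ℝ) 1)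
    (μ : Measure (Fin (n + 1) → ℝ)) [IsProbabilityMeasure μ]
    (k : ℕ) (hk : k = ⌈(1 - α) * ((n : ℝ) + 1)⌉₊) (hkn : k ≤ n) :
    1 - α - (1 / ((n : ℝ) + 1)) *
        ∑ i : Fin n,
          tvDist μ (μ.map fun s => s ∘ (Equiv.swap i.castSucc (Fin.last n)))
      ≤ (μ {s | s (Fin.last n) ≤
            kthSmallest (List.ofFn fun i : Fin n => s i.castSucc) k}).toReal :=
  conformal_coverage_nonexchangeable_general n α hα μ k hk hkn
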